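/- arXiv:1403.1512 — 5 statements merged into one kernel-verified Lean document; each statement's English description precedes it below -/
import Mathlib

section
/- Let G = (V,E) be a simple graph, a, b distinct vertices of G, and G* the subdivision of G. Let F be a minimal (a,b)-cut of G, let f' = uw ∈ F, and suppose u ∉ {a,b}. Then there exists a subset X ⊆ {v_f : f ∈ F \ {f'}} such that X ∪ {u} is a minimal (a,b)-separator of G*; in particular, u belongs to a minimal (a,b)-separator of G* of size at most |F|. -/
/-!
Statement 8: Let `G = (V,E)` be a simple graph, `a, b` distinct vertices of `G`, and `G*`
the subdivision of `G`.  Let `F` be a minimal `(a,b)`-cut of `G`, let `f' = uw ∈ F`, and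
suppose `u ∉ {a,b}`.  Then there exists a subset `X ⊆ {v_f : f ∈ F \ {f'}}` such that
`X ∪ {u}` is a minimal `(a,b)`-separator of `G*`; in particular, `u` belongs to a minimal
`(a,b)`-separator of `G*` of size at most `|F|`.
-/

namespace Stmt8

variable {V : Type*} [Fintype V] [DecidableEq V]

/-- The subdivision `G*` of a simple graph `G`: each edge `f = uw` is replaced by a new
vertex `v_f` adjacent precisely to `u` and `w`; no two original vertices are adjacent. -/
def subdiv (G : SimpleGraph V) : SimpleGraph (V ⊕ G.edgeSet) where
  Adj x y :=
    match x, y with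
    | Sum.inl u, Sum.inr f => u ∈ (f : Sym2 V)
    | Sum.inr f, Sum.inl u => u ∈ (f : Sym2 V)
    | _, _ => False
  symm := ⟨by rintro (u | f) (v | g) h <;> exact h⟩
  loopless := ⟨by rintro (u | f) h <;> exact h⟩

/-- `F` is an `(a,b)`-cut of `G`. -/
def IsCutSet {W : Type*} (G : SimpleGraph W) (a b : W) (F : Set (Sym2 W)) : Prop :=
  F ⊆ G.edgeSet ∧
  ¬ Relation.ReflTransGen (fun x y => G.Adj x y ∧ s(x, y) ∉ F) a b

/-- `F` is a minimal `(a,b)`-cut of `G`. -/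
def IsMinimalCutSet {W : Type*} (G : SimpleGraph W) (a b : W) (F : Set (Sym2 W)) : Prop :=
  IsCutSet G a b F ∧ ∀ F' ⊆ F, IsCutSet G a b F' → F' = F

/-- `S` is an `(a,b)`-separator of `G`. -/
def IsSeparator {W : Type*} (G : SimpleGraph W) (a b : W) (S : Set W) : Prop :=
  a ∉ S ∧ b ∉ S ∧
  ¬ Relation.ReflTransGen (fun x y => G.Adj x y ∧ x ∉ S ∧ y ∉ S) a b

/-- `S` is a minimal `(a,b)`-separator of `G`. -/
def IsMinimalSeparator {W : Type*} (G : SimpleGraph W) (a b : W) (S : Set W) : Prop :=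
  IsSeparator G a b S ∧ ∀ S' ⊆ S, IsSeparator G a b S' → S' = S

lemma exists_minimal_subset {α : Type*} (P : Set α → Prop) :
    ∀ (n : ℕ) (S : Set α), S.Finite → S.ncard ≤ n → P S →
      ∃ T ⊆ S, P T ∧ ∀ T' ⊆ T, P T' → T' = T := by
  intro n
  induction n with
  | zero =>
    intro S hfin hc hP
    have hS : S = ∅ := (Set.ncard_eq_zero hfin).mp (Nat.le_zero.mp hc)
    refine ⟨S, subset_rfl, hP, fun T' hT' _ => ?_⟩
    subst hS
    exact Set.subset_empty_iff.mp hT'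
  | succ n ih =>
    intro S hfin hc hP
    by_cases h : ∀ T' ⊆ S, P T' → T' = S
    · exact ⟨S, subset_rfl, hP, h⟩
    · push_neg at h
      obtain ⟨T', hT'S, hPT', hne⟩ := h
      have hssub : T' ⊂ S := ⟨hT'S, fun h2 => hne (subset_antisymm hT'S h2)⟩
      have hlt : T'.ncard < S.ncard := Set.ncard_lt_ncard hssub hfin
      obtain ⟨T, hTT', hPT, hmin⟩ := ih T' (hfin.subset hT'S) (by omega) hPT'
      exact ⟨T, hTT'.trans hT'S, hPT, hmin⟩

theorem endpoint_in_minimal_separator (G : SimpleGraph V) (a b : V) (hab : a ≠ b)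
    (F : Set (Sym2 V)) (hF : IsMinimalCutSet G a b F)
    (u w : V) (huw : G.Adj u w) (hfF : s(u, w) ∈ F) (hua : u ≠ a) (hub : u ≠ b) :
    ∃ X ⊆ (Sum.inr '' {f : G.edgeSet | (f : Sym2 V) ∈ F \ {s(u, w)}} :
        Set (V ⊕ G.edgeSet)),
      IsMinimalSeparator (subdiv G) (Sum.inl a) (Sum.inl b) (X ∪ {Sum.inl u}) ∧
      (X ∪ {Sum.inl u}).ncard ≤ F.ncard := by
  classical
  obtain ⟨⟨hFE, hFcut⟩, hFmin⟩ := hF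
  set A : Set G.edgeSet := {f : G.edgeSet | (f : Sym2 V) ∈ F \ {s(u, w)}} with hA
  set S₀ : Set (V ⊕ G.edgeSet) := Sum.inr '' A ∪ {Sum.inl u} with hS₀
  have hinl_mem : ∀ x : V, Sum.inl x ∈ S₀ ↔ x = u := by
    intro x; simp [hS₀]
  have hinr_mem : ∀ f : G.edgeSet, Sum.inr f ∈ S₀ ↔ (f : Sym2 V) ∈ F \ {s(u, w)} := by
    intro f; simp [hS₀, hA]
  -- S₀ is a separator
  have hsepS₀ : IsSeparator (subdiv G) (Sum.inl a) (Sum.inl b) S₀ := by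
    refine ⟨fun h => hua ((hinl_mem a).mp h).symm, fun h => hub ((hinl_mem b).mp h).symm, ?_⟩
    intro hreach
    apply hFcut
    have key : ∀ z, Relation.ReflTransGen
        (fun x y => (subdiv G).Adj x y ∧ x ∉ S₀ ∧ y ∉ S₀) (Sum.inl a) z →
        (∀ x : V, z = Sum.inl x →
          Relation.ReflTransGen (fun x y => G.Adj x y ∧ s(x, y) ∉ F) a x) ∧
        (∀ f : G.edgeSet, z = Sum.inr f → ∃ x, x ∈ (f : Sym2 V) ∧ x ≠ u ∧
          Relation.ReflTransGen (fun x y => G.Adj x y ∧ s(x, y) ∉ F) a x) := by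
      intro z hz
      induction hz with
      | refl =>
        refine ⟨fun x hx => ?_, fun f hf => (Sum.inl_ne_inr hf).elim⟩
        cases hx
        exact Relation.ReflTransGen.refl
      | @tail z z' hz hstep ih =>
        obtain ⟨hadj, hzS, hz'S⟩ := hstep
        rcases z with x | f <;> rcases z' with y | g
        · exact absurd hadj (by simp [subdiv])
        · refine ⟨fun y hy => (Sum.inr_ne_inl hy).elim, fun g' hg' => ?_⟩
          have hgg : g' = g := Sum.inr_injective hg'.symm
          subst hgg
          have hx : x ∈ (g' : Sym2 V) := hadj
          have hxu : x ≠ u := fun h => hzS ((hinl_mem x).mpr h)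
          exact ⟨x, hx, hxu, ih.1 x rfl⟩
        · refine ⟨fun y' hy' => ?_, fun g hg => (Sum.inl_ne_inr hg).elim⟩
          have hyy : y' = y := Sum.inl_injective hy'.symm
          subst hyy
          obtain ⟨x, hxf, hxu, hrx⟩ := ih.2 f rfl
          have hy : y' ∈ (f : Sym2 V) := hadj
          have hyu : y' ≠ u := fun h => hz'S ((hinl_mem y').mpr h)
          by_cases hxy : x = y'
          · subst hxy; exact hrx
          · have hfeq : (f : Sym2 V) = s(x, y') := (Sym2.mem_and_mem_iff hxy).mp ⟨hxf, hy⟩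
            have hadjxy : G.Adj x y' := by
              rw [← SimpleGraph.mem_edgeSet, ← hfeq]; exact f.2
            have hnF : s(x, y') ∉ F := by
              intro hmem
              have hfF' : (f : Sym2 V) ∈ F := hfeq ▸ hmem
              have h1 : (f : Sym2 V) ∉ F \ {s(u, w)} := fun h => hzS ((hinr_mem f).mpr h)
              have h2 : (f : Sym2 V) = s(u, w) := by
                by_contra h3
                exact h1 ⟨hfF', h3⟩
              have hu : u ∈ (f : Sym2 V) := by rw [h2]; exact Sym2.mem_mk_left u w
              rw [hfeq] at hu
              rcases Sym2.mem_iff.mp hu with h | h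
              · exact hxu h.symm
              · exact hyu h.symm
            exact hrx.tail ⟨hadjxy, hnF⟩
        · exact absurd hadj (by simp [subdiv])
    exact (key (Sum.inl b) hreach).1 b rfl
  -- every separator subset of S₀ contains inl u
  have hu_mem : ∀ S ⊆ S₀, IsSeparator (subdiv G) (Sum.inl a) (Sum.inl b) S →
      Sum.inl u ∈ S := by
    rintro S hSsub ⟨haS, hbS, hnr⟩
    by_contra huS
    set F'' : Set (Sym2 V) := {e | ∃ he : e ∈ G.edgeSet, Sum.inr ⟨e, he⟩ ∈ S} with hF''
    have hF''sub : F'' ⊆ F \ {s(u, w)} := by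
      rintro e ⟨he, hmem⟩
      exact (hinr_mem ⟨e, he⟩).mp (hSsub hmem)
    have hinl_not : ∀ x : V, Sum.inl x ∉ S := by
      intro x hx
      have hxu : x = u := (hinl_mem x).mp (hSsub hx)
      subst hxu
      exact huS hx
    have hcut : IsCutSet G a b F'' := by
      refine ⟨fun e he => he.1, ?_⟩
      intro hreach
      apply hnr
      have lift : ∀ x, Relation.ReflTransGen (fun x y => G.Adj x y ∧ s(x, y) ∉ F'') a x →
          Relation.ReflTransGen
            (fun x y => (subdiv G).Adj x y ∧ x ∉ S ∧ y ∉ S) (Sum.inl a) (Sum.inl x) := by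
        intro x hx
        induction hx with
        | refl => exact Relation.ReflTransGen.refl
        | @tail p q hp hstep ih =>
          obtain ⟨hadj, hnF''⟩ := hstep
          have he : s(p, q) ∈ G.edgeSet := hadj
          have hmid : (Sum.inr ⟨s(p, q), he⟩ : V ⊕ G.edgeSet) ∉ S := by
            intro hmem
            exact hnF'' ⟨he, hmem⟩
          have step1 : Relation.ReflTransGen
              (fun x y => (subdiv G).Adj x y ∧ x ∉ S ∧ y ∉ S) (Sum.inl a)
              (Sum.inr ⟨s(p, q), he⟩) :=
            ih.tail ⟨Sym2.mem_mk_left p q, hinl_not p, hmid⟩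
          exact step1.tail ⟨Sym2.mem_mk_right p q, hmid, hinl_not q⟩
      exact lift b hreach
    have hFeq : F'' = F := hFmin F'' (hF''sub.trans Set.diff_subset) hcut
    have : s(u, w) ∈ F'' := hFeq ▸ hfF
    exact (hF''sub this).2 rfl
  -- pick a minimal separator inside S₀
  obtain ⟨S, hSsub, hSsep, hSmin⟩ := exists_minimal_subset
    (IsSeparator (subdiv G) (Sum.inl a) (Sum.inl b)) S₀.ncard S₀ (Set.toFinite _) le_rfl hsepS₀
  have huS : Sum.inl u ∈ S := hu_mem S hSsub hSsep
  have hXu : S \ {Sum.inl u} ∪ {Sum.inl u} = S := by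
    rw [Set.diff_union_self]
    exact Set.union_eq_self_of_subset_right (Set.singleton_subset_iff.mpr huS)
  have hcardS₀ : S₀.ncard ≤ F.ncard := by
    have h1 : (Sum.inr '' A : Set (V ⊕ G.edgeSet)).ncard = A.ncard :=
      Set.ncard_image_of_injective _ Sum.inr_injective
    have h2 : A.ncard = (F \ {s(u, w)}).ncard := by
      have himg : Subtype.val '' A = F \ {s(u, w)} := by
        ext e
        constructor
        · rintro ⟨⟨e', he'⟩, hmem, rfl⟩; exact hmem
        · intro hm; exact ⟨⟨e, hFE hm.1⟩, hm, rfl⟩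
      rw [← himg]
      exact (Set.ncard_image_of_injective _ Subtype.val_injective).symm
    have h3 : (F \ {s(u, w)}).ncard + 1 = F.ncard :=
      Set.ncard_diff_singleton_add_one hfF (Set.toFinite F)
    calc S₀.ncard ≤ (Sum.inr '' A : Set (V ⊕ G.edgeSet)).ncard +
          ({Sum.inl u} : Set (V ⊕ G.edgeSet)).ncard := Set.ncard_union_le _ _
      _ = (F \ {s(u, w)}).ncard + 1 := by rw [h1, h2, Set.ncard_singleton]
      _ = F.ncard := h3
  refine ⟨S \ {Sum.inl u}, ?_, ?_, ?_⟩
  · rintro z ⟨hzS, hznu⟩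
    rcases hSsub hzS with h | h
    · exact h
    · exact absurd h hznu
  · rw [hXu]
    exact ⟨hSsep, hSmin⟩
  · rw [hXu]
    exact le_trans (Set.ncard_le_ncard hSsub (Set.toFinite _)) hcardS₀


end Stmt8
end

section
/- Let D be a balanced directed multigraph on a finite vertex set V, and let u, v be vertices with m = μ_D(u,v). Then there exist m pairwise arc-disjoint directed cycles in D, each containing exactly one copy of the arc (u,v); that is, there exist directed multigraphs C₁, …, C_m, each of which is a directed cycle with μ_{C_i}(u,v) = 1, such that Σ_{i=1}^m μ_{C_i}(x,y) ≤ μ_D(x,y) for every pair of vertices x, y. -/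
/-!
Statement 9: Let `D` be a balanced directed multigraph on a finite vertex set `V`, and let
`u, v` be vertices with `m = μ_D(u,v)`.  Then there exist `m` pairwise arc-disjoint directed
cycles in `D`, each containing exactly one copy of the arc `(u,v)`.
-/

namespace Stmt9

variable {V : Type*} [Fintype V] [DecidableEq V]

/-- Out-degree of `v` in the directed multigraph with multiplicity function `μ`. -/
def outDeg (μ : V → V → ℕ) (v : V) : ℕ := ∑ u, μ v u

/-- In-degree of `v` in the directed multigraph with multiplicity function `μ`. -/
def inDeg (μ : V → V → ℕ) (v : V) : ℕ := ∑ u, μ u v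

/-- A directed multigraph is balanced if `d⁺(v) = d⁻(v)` for every vertex `v`. -/
def Balanced (μ : V → V → ℕ) : Prop := ∀ v, outDeg μ v = inDeg μ v

/-- `C` is a directed cycle: its arcs are `(w₁,w₂), (w₂,w₃), …, (w_{ℓ−1},w_ℓ), (w_ℓ,w₁)`,
each with multiplicity `1`, for some sequence of distinct vertices `w₁, …, w_ℓ` with
`ℓ ≥ 2` (here indexed cyclically by `ZMod ℓ`). -/
def IsDirectedCycle (C : V → V → ℕ) : Prop :=
  ∃ (l : ℕ) (f : ZMod l → V), 2 ≤ l ∧ Function.Injective f ∧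
    ∀ x y : V, C x y ≤ 1 ∧ (C x y = 1 ↔ ∃ i : ZMod l, f i = x ∧ f (i + 1) = y)

/-- From any chain we can pass to the suffix starting at a given member. -/
lemma chain_suffix {r : V → V → Prop} :
    ∀ (l : List V) (a : V), List.Chain r a l → ∀ c ∈ a :: l,
      ∃ l₂, List.Chain r c l₂ ∧
        (c :: l₂).getLast (List.cons_ne_nil _ _) = (a :: l).getLast (List.cons_ne_nil _ _) ∧
        (c :: l₂) <:+ (a :: l) := by
  intro l
  induction l with
  | nil =>
    intro a _ c hc
    simp only [List.mem_singleton] at hc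
    subst hc
    exact ⟨[], List.Chain.nil, rfl, List.suffix_refl _⟩
  | cons b t ih =>
    intro a hchain c hc
    rcases List.mem_cons.mp hc with h | h
    · subst h
      exact ⟨b :: t, hchain, rfl, List.suffix_refl _⟩
    · obtain ⟨hab, hbt⟩ := List.isChain_cons_cons.mp hchain
      obtain ⟨l₂, h1, h2, h3⟩ := ih b hbt c h
      exact ⟨l₂, h1, by rw [h2, List.getLast_cons_cons],
        h3.trans (List.suffix_cons _ _)⟩

lemma exists_nodup_chain {r : V → V → Prop} {a b : V}
    (h : Relation.ReflTransGen r a b) :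
    ∃ l, List.Chain r a l ∧ (a :: l).getLast (List.cons_ne_nil _ _) = b ∧ (a :: l).Nodup := by
  induction h using Relation.ReflTransGen.head_induction_on with
  | refl => exact ⟨[], List.Chain.nil, rfl, List.nodup_singleton _⟩
  | head hac _ ih =>
    rename_i a c _
    obtain ⟨l, hl, hlast, hnd⟩ := ih
    by_cases hmem : a ∈ c :: l
    · obtain ⟨l₂, h1, h2, h3⟩ := chain_suffix l c hl a hmem
      exact ⟨l₂, h1, h2.trans hlast, h3.sublist.nodup hnd⟩
    · exact ⟨c :: l, List.Chain.cons hac hl, by rwa [List.getLast_cons_cons],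
        List.nodup_cons.mpr ⟨hmem, hnd⟩⟩

lemma reach (μ' : V → V → ℕ) (v u : V)
    (hv : inDeg μ' v < outDeg μ' v)
    (hother : ∀ x, x ≠ v → x ≠ u → outDeg μ' x = inDeg μ' x) :
    Relation.ReflTransGen (fun a b => 0 < μ' a b) v u := by
  classical
  by_contra hcon
  set r : V → V → Prop := fun a b => 0 < μ' a b with hr
  set S : Finset V := Finset.univ.filter (fun x => Relation.ReflTransGen r v x) with hS
  have hvS : v ∈ S := by simp only [hS, Finset.mem_filter, Finset.mem_univ, true_and]; exact Relation.ReflTransGen.refl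
  have huS : u ∉ S := by simp only [hS, Finset.mem_filter, Finset.mem_univ, true_and]; exact hcon
  have hclosed : ∀ x ∈ S, ∀ y, y ∉ S → μ' x y = 0 := by
    intro x hx y hy
    by_contra hpos
    have : y ∈ S := by
      simp only [hS, Finset.mem_filter, Finset.mem_univ, true_and] at hx ⊢
      exact hx.tail (Nat.pos_of_ne_zero hpos)
    exact hy this
  have h1 : ∑ x ∈ S, outDeg μ' x = ∑ x ∈ S, ∑ y ∈ S, μ' x y := by
    refine Finset.sum_congr rfl fun x hx => ?_
    rw [outDeg, ← Finset.sum_add_sum_compl S (μ' x)]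
    have : ∑ y ∈ Sᶜ, μ' x y = 0 :=
      Finset.sum_eq_zero fun y hy => hclosed x hx y (Finset.mem_compl.mp hy)
    omega
  have h2 : ∑ x ∈ S, ∑ y ∈ S, μ' x y ≤ ∑ x ∈ S, inDeg μ' x := by
    rw [Finset.sum_comm]
    refine Finset.sum_le_sum fun x _ => ?_
    exact Finset.sum_le_sum_of_subset (Finset.subset_univ S)
  have h3 : ∑ x ∈ S, inDeg μ' x < ∑ x ∈ S, outDeg μ' x := by
    refine Finset.sum_lt_sum (fun x hx => ?_) ⟨v, hvS, hv⟩
    rcases eq_or_ne x v with rfl | hxv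
    · exact hv.le
    · exact (hother x hxv (fun h => huS (h ▸ hx))).ge
  omega

lemma cycle_of_list (L : List V) (hlen : 2 ≤ L.length) (hnodup : L.Nodup)
    (R : V → V → Prop)
    (harc : ∀ k, (hk : k < L.length) →
      R (L[k]) (L[(k+1) % L.length]'(Nat.mod_lt _ (by omega)))) :
    ∃ C : V → V → ℕ, IsDirectedCycle C ∧ Balanced C ∧
      (∀ x y, C x y = 1 → R x y) ∧ (∀ x y, C x y ≤ 1) ∧
      C (L[0]'(by omega)) (L[1]'(by omega)) = 1 := by
  classical
  set l := L.length with hl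
  haveI : NeZero l := ⟨by omega⟩
  haveI : Fact (1 < l) := ⟨by omega⟩
  set f : ZMod l → V := fun i => L[i.val]'(ZMod.val_lt i) with hf
  have finj : Function.Injective f := by
    intro i j hij
    have := (hnodup.getElem_inj_iff (hi := ZMod.val_lt i) (hj := ZMod.val_lt j)).mp hij
    exact ZMod.val_injective l this
  have hsucc : ∀ i : ZMod l, f (i + 1) = L[(i.val + 1) % l]'(Nat.mod_lt _ (by omega)) := by
    intro i
    have h1 : (i + 1).val = (i.val + 1) % l := by
      rw [ZMod.val_add, ZMod.val_one]
    simp only [hf]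
    congr 1
  set C : V → V → ℕ := fun x y =>
    if ∃ i : ZMod l, f i = x ∧ f (i + 1) = y then 1 else 0 with hC
  have hle1 : ∀ x y, C x y ≤ 1 := by
    intro x y; simp only [hC]; split <;> omega
  have hiff : ∀ x y, C x y = 1 ↔ ∃ i : ZMod l, f i = x ∧ f (i + 1) = y := by
    intro x y; simp only [hC]; split <;> simp_all
  have hcyc : IsDirectedCycle C := ⟨l, f, hlen, finj, fun x y => ⟨hle1 x y, hiff x y⟩⟩
  have hrow : ∀ (i : ZMod l) (y : V), C (f i) y = if y = f (i + 1) then 1 else 0 := by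
    intro i y
    rcases eq_or_ne y (f (i + 1)) with rfl | hy
    · rw [if_pos rfl, (hiff _ _).mpr ⟨i, rfl, rfl⟩]
    · rw [if_neg hy]
      simp only [hC]
      rw [if_neg]
      rintro ⟨j, hj1, hj2⟩
      exact hy (by rw [← hj2, finj hj1])
  have hcol : ∀ (i : ZMod l) (y : V), C y (f i) = if y = f (i - 1) then 1 else 0 := by
    intro i y
    rcases eq_or_ne y (f (i - 1)) with rfl | hy
    · rw [if_pos rfl, (hiff _ _).mpr ⟨i - 1, rfl, by rw [sub_add_cancel]⟩]
    · rw [if_neg hy]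
      simp only [hC]
      rw [if_neg]
      rintro ⟨j, hj1, hj2⟩
      have : j = i - 1 := eq_sub_of_add_eq (finj hj2)
      exact hy (by rw [← hj1, this])
  refine ⟨C, hcyc, ?_, ?_, hle1, ?_⟩
  · -- Balanced
    intro x
    by_cases hx : ∃ i : ZMod l, f i = x
    · obtain ⟨i, rfl⟩ := hx
      have h1 : outDeg C (f i) = 1 := by
        simp only [outDeg]
        rw [Finset.sum_congr rfl fun y _ => hrow i y,
          Finset.sum_ite_eq' Finset.univ (f (i + 1)) (fun _ => 1)]
        simp
      have h2 : inDeg C (f i) = 1 := by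
        simp only [inDeg]
        rw [Finset.sum_congr rfl fun y _ => hcol i y,
          Finset.sum_ite_eq' Finset.univ (f (i - 1)) (fun _ => 1)]
        simp
      rw [h1, h2]
    · have h1 : outDeg C x = 0 := Finset.sum_eq_zero fun y _ => by
        simp only [hC]; rw [if_neg]; rintro ⟨j, hj1, _⟩; exact hx ⟨j, hj1⟩
      have h2 : inDeg C x = 0 := Finset.sum_eq_zero fun y _ => by
        simp only [hC]; rw [if_neg]; rintro ⟨j, _, hj2⟩; exact hx ⟨j + 1, hj2⟩
      rw [h1, h2]
  · intro x y hxy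
    obtain ⟨i, hi1, hi2⟩ := (hiff x y).mp hxy
    rw [hsucc] at hi2
    rw [← hi1, ← hi2]
    exact harc i.val (ZMod.val_lt i)
  · refine (hiff _ _).mpr ⟨0, ?_, ?_⟩
    · have h0 : (0 : ZMod l).val = 0 := ZMod.val_zero
      simp only [hf, h0]
    · have h01 : (0 : ZMod l) + 1 = 1 := zero_add 1
      have h1 : (1 : ZMod l).val = 1 := ZMod.val_one l
      simp only [hf, h01, h1]

lemma exists_cycle_through (μ : V → V → ℕ) (hirrefl : ∀ v, μ v v = 0)
    (hbal : Balanced μ) (u v : V) (hpos : 0 < μ u v) :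
    ∃ C : V → V → ℕ, IsDirectedCycle C ∧ Balanced C ∧ C u v = 1 ∧
      ∀ x y, C x y ≤ μ x y := by
  classical
  have huv : u ≠ v := by rintro rfl; rw [hirrefl] at hpos; omega
  set μ' : V → V → ℕ := fun x y => μ x y - (if x = u ∧ y = v then 1 else 0) with hμ'
  have hμ'le : ∀ x y, μ' x y ≤ μ x y := fun x y => Nat.sub_le _ _
  have hout : ∀ x, outDeg μ' x = outDeg μ x - (if x = u then 1 else 0) := by
    intro x
    simp only [outDeg, hμ']
    rw [Finset.sum_tsub_distrib]
    · congr 1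
      rcases eq_or_ne x u with rfl | hx
      · simp
      · simp [hx]
    · intro y _
      split
      · next h => rw [h.1, h.2]; omega
      · omega
  have hin : ∀ x, inDeg μ' x = inDeg μ x - (if x = v then 1 else 0) := by
    intro x
    simp only [inDeg, hμ']
    rw [Finset.sum_tsub_distrib]
    · congr 1
      rcases eq_or_ne x v with rfl | hx
      · simp
      · simp [hx]
    · intro y _
      split
      · next h => rw [h.1, h.2]; omega
      · omega
  have hinv : 0 < inDeg μ v := by
    have h : μ u v ≤ ∑ x, μ x v := Finset.single_le_sum (f := fun x => μ x v)
      (fun i _ => Nat.zero_le _) (Finset.mem_univ u)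
    rw [inDeg]
    omega
  have hrel : Relation.ReflTransGen (fun a b => 0 < μ' a b) v u := by
    apply reach
    · rw [hout v, hin v, if_neg (Ne.symm huv), if_pos rfl]
      have := hbal v
      omega
    · intro x hxv hxu
      rw [hout x, hin x, if_neg hxu, if_neg hxv, hbal x]
  obtain ⟨l₀, hchain, hlast, hnodupP⟩ := exists_nodup_chain hrel
  set P : List V := v :: l₀ with hP
  have hPne : P ≠ [] := List.cons_ne_nil _ _
  have hl₀ne : l₀ ≠ [] := by
    rintro rfl
    exact huv (hlast.symm)
  have hP2 : 2 ≤ P.length := by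
    have : l₀.length ≠ 0 := fun h => hl₀ne (List.length_eq_zero_iff.mp h)
    simp only [hP, List.length_cons]; omega
  set L : List V := u :: P.dropLast with hL
  have hLlen : L.length = P.length := by
    simp only [hL, List.length_cons, List.length_dropLast]; omega
  have hlen2 : 2 ≤ L.length := by omega
  have hPsplit : P.dropLast ++ [u] = P := by
    rw [← hlast]; exact List.dropLast_append_getLast hPne
  have hnodupL : L.Nodup := by
    have h1 : (P.dropLast ++ [u]).Nodup := by rw [hPsplit]; exact hnodupP
    rw [List.nodup_append] at h1
    exact List.nodup_cons.mpr ⟨fun h => h1.2.2 u h u (List.mem_singleton_self u) rfl, h1.1⟩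
  have hgetL : ∀ k, (hk : 1 ≤ k) → (hk2 : k < L.length) →
      L[k] = P[k - 1]'(by omega) := by
    intro k hk hk2
    have hk3 : k - 1 < P.dropLast.length := by
      rw [List.length_dropLast]; omega
    have : L[k] = P.dropLast[k - 1]'hk3 := by
      simp only [hL]
      rw [List.getElem_cons]
      split
      · omega
      · rfl
    rw [this, List.getElem_dropLast]
  have hL0 : L[0]'(by omega) = u := rfl
  have hL1 : L[1]'(by omega) = v := by
    rw [hgetL 1 le_rfl (by omega)]
    rfl
  have hPlast : P[P.length - 1]'(by omega) = u := by
    rw [← List.getLast_eq_getElem hPne, hlast]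
  have hchain' : ∀ i, (hi : i < P.length - 1) →
      0 < μ' (P[i]'(by omega)) (P[i+1]'(by omega)) := by
    have hc : List.Chain' (fun a b => 0 < μ' a b) P := hchain
    intro i hi
    have := List.isChain_iff_getElem.mp hc i (by omega)
    simpa using this
  set R : V → V → Prop := fun x y => (x = u ∧ y = v) ∨ 0 < μ' x y with hR
  have harc : ∀ k, (hk : k < L.length) →
      R (L[k]) (L[(k+1) % L.length]'(Nat.mod_lt _ (by omega))) := by
    intro k hk
    rcases Nat.eq_or_lt_of_le (Nat.zero_le k) with h0 | h1
    · -- k = 0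
      have hk0 : k = 0 := h0.symm
      subst hk0
      have hmod : (0 + 1) % L.length = 1 := Nat.mod_eq_of_lt (by omega)
      left
      constructor
      · exact hL0
      · simp only [hmod]
        exact hL1
    · -- 1 ≤ k
      right
      rcases eq_or_ne k (L.length - 1) with hke | hke
      · -- wrap around
        have hmod : (k + 1) % L.length = 0 := by
          rw [hke]; simp only [Nat.sub_add_cancel (by omega : 1 ≤ L.length)]
          exact Nat.mod_self _
        have e1 : L[k] = P[k - 1]'(by omega) := hgetL k h1 hk
        have e2 : L[(k+1) % L.length]'(Nat.mod_lt _ (by omega)) = u := by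
          simp only [hmod]; exact hL0
        rw [e1, e2, ← hPlast]
        have h5 := hchain' (k - 1) (by omega)
        have hidx : k - 1 + 1 = P.length - 1 := by omega
        simp only [hidx] at h5
        exact h5
      · -- middle
        have hk1 : k + 1 < L.length := by omega
        have hmod : (k + 1) % L.length = k + 1 := Nat.mod_eq_of_lt hk1
        have e1 : L[k] = P[k - 1]'(by omega) := hgetL k h1 hk
        have e2 : L[(k+1) % L.length]'(Nat.mod_lt _ (by omega)) = P[k]'(by omega) := by
          simp only [hmod]
          rw [hgetL (k+1) (by omega) hk1]
          congr 1
        rw [e1, e2]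
        have h5 := hchain' (k - 1) (by omega)
        have hidx : k - 1 + 1 = k := by omega
        simp only [hidx] at h5
        exact h5
  obtain ⟨C, hcyc, hbalC, hRC, hle1C, hCuv⟩ := cycle_of_list L hlen2 hnodupL R harc
  refine ⟨C, hcyc, hbalC, ?_, ?_⟩
  · rw [hL0, hL1] at hCuv; exact hCuv
  · intro x y
    rcases Nat.lt_or_ge (C x y) 1 with h | h
    · omega
    · have h1 : C x y = 1 := le_antisymm (hle1C x y) h
      rcases hRC x y h1 with ⟨rfl, rfl⟩ | hpos'
      · omega
      · have := hμ'le x y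
        omega

lemma main_aux : ∀ (m : ℕ) (μ : V → V → ℕ), (∀ v, μ v v = 0) → Balanced μ →
    ∀ u v, m = μ u v →
    ∃ C : Fin m → (V → V → ℕ),
      (∀ i, IsDirectedCycle (C i)) ∧ (∀ i, C i u v = 1) ∧
      (∀ x y : V, ∑ i, C i x y ≤ μ x y) := by
  intro m
  induction m with
  | zero =>
    intro μ _ _ u v _
    exact ⟨fun i => i.elim0, fun i => i.elim0, fun i => i.elim0, fun x y => by simp⟩
  | succ m ih =>
    intro μ hirrefl hbal u v hm
    have hpos : 0 < μ u v := by omega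
    obtain ⟨C₀, hcyc₀, hbal₀, huv₀, hle₀⟩ := exists_cycle_through μ hirrefl hbal u v hpos
    set μ₂ : V → V → ℕ := fun x y => μ x y - C₀ x y with hμ₂
    have hirrefl₂ : ∀ w, μ₂ w w = 0 := fun w => by simp [hμ₂, hirrefl w]
    have hbal₂ : Balanced μ₂ := by
      intro x
      have h1 : outDeg μ₂ x = outDeg μ x - outDeg C₀ x := by
        simp only [outDeg, hμ₂]
        exact Finset.sum_tsub_distrib _ (fun y _ => hle₀ x y)
      have h2 : inDeg μ₂ x = inDeg μ x - inDeg C₀ x := by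
        simp only [inDeg, hμ₂]
        exact Finset.sum_tsub_distrib _ (fun y _ => hle₀ y x)
      rw [h1, h2, hbal x, hbal₀ x]
    have hm₂ : m = μ₂ u v := by
      simp only [hμ₂]
      omega
    obtain ⟨C', h1', h2', h3'⟩ := ih μ₂ hirrefl₂ hbal₂ u v hm₂
    refine ⟨Fin.cons C₀ C', ?_, ?_, ?_⟩
    · intro i
      refine Fin.cases ?_ ?_ i
      · exact hcyc₀
      · intro j; simpa using h1' j
    · intro i
      refine Fin.cases ?_ ?_ i
      · exact huv₀
      · intro j; simpa using h2' j
    · intro x y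
      rw [Fin.sum_univ_succ]
      simp only [Fin.cons_zero, Fin.cons_succ]
      have ha := h3' x y
      have hb := hle₀ x y
      simp only [hμ₂] at ha
      omega

theorem balanced_arc_disjoint_cycles (μ : V → V → ℕ) (hirrefl : ∀ v : V, μ v v = 0)
    (hbal : Balanced μ) (u v : V) (m : ℕ) (hm : m = μ u v) :
    ∃ C : Fin m → (V → V → ℕ),
      (∀ i, IsDirectedCycle (C i)) ∧
      (∀ i, C i u v = 1) ∧
      (∀ x y : V, ∑ i, C i x y ≤ μ x y) := by
  exact main_aux m μ hirrefl hbal u v hm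

end Stmt9
end

section
/- Let D be a t-balanced directed multigraph on a finite vertex set V for a demand function t : V → ℤ with Σ_v t(v) = 0, and let p = Σ_{v : t(v)>0} t(v). If u, v are vertices with μ_D(u,v) > p, then D contains a directed cycle containing a copy of the arc (u,v); equivalently, there is a directed path in D from v to u. -/
/-!
Statement 10: Let `D` be a `t`-balanced directed multigraph on a finite vertex set `V` for
a demand function `t : V → ℤ` with `Σ_v t(v) = 0`, and let `p = Σ_{v : t(v)>0} t(v)`.  If
`u, v` are vertices with `μ_D(u,v) > p`, then `D` contains a directed cycle containing a
copy of the arc `(u,v)`; equivalently, there is a directed path in `D` from `v` to `u`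
(a sequence of distinct vertices `v = v₁, …, v_ℓ = u` with `μ_D(v_i, v_{i+1}) ≥ 1`).
-/

namespace Stmt10


open List in
lemma exists_nodup_chain_list {V : Type*} {r : V → V → Prop} {a b : V}
    (h : Relation.ReflTransGen r a b) :
    ∃ L : List V, L.Chain' r ∧ L.Nodup ∧ L.head? = some a ∧ L.getLast? = some b := by
  induction h with
  | refl => exact ⟨[a], List.isChain_singleton _, by simp, rfl, rfl⟩
  | tail hab hbc ih =>
    rename_i b c
    obtain ⟨L, hch, hnd, hhd, hlast⟩ := ih
    by_cases hc : c ∈ L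
    · obtain ⟨L₁, L₂, rfl⟩ := List.append_of_mem hc
      refine ⟨L₁ ++ [c], ?_, ?_, ?_, ?_⟩
      · exact hch.prefix ⟨L₂, by simp⟩
      · exact hnd.sublist (by simpa using List.sublist_append_left (L₁ ++ [c]) L₂)
      · rw [← hhd]
        cases L₁ <;> simp
      · simp
    · refine ⟨L ++ [c], ?_, ?_, ?_, ?_⟩
      · refine List.IsChain.append hch (List.isChain_singleton _) ?_
        intro x hx y hy
        simp at hy
        subst hy
        rw [hlast] at hx
        simp at hx; subst hx; exact hbc
      · simp [List.nodup_append, hnd, hc]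
        rintro x hx rfl; exact hc hx
      · cases L with
        | nil => simp at hhd
        | cons x xs => simpa using hhd
      · simp

lemma exists_fin_path {V : Type*} {r : V → V → Prop} {a b : V}
    (h : Relation.ReflTransGen r a b) :
    ∃ (l : ℕ) (f : Fin (l + 1) → V), Function.Injective f ∧
      f 0 = a ∧ f (Fin.last l) = b ∧
      ∀ i : Fin l, r (f i.castSucc) (f i.succ) := by
  obtain ⟨L, hch, hnd, hhd, hlast⟩ := exists_nodup_chain_list h
  have hne : L ≠ [] := by rintro rfl; simp at hhd
  have hlen : L.length - 1 + 1 = L.length := Nat.succ_pred_eq_of_pos (List.length_pos_iff.2 hne)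
  refine ⟨L.length - 1, fun i => L.get (Fin.cast hlen i), ?_, ?_, ?_, ?_⟩
  · intro i j hij
    have := List.nodup_iff_injective_get.1 hnd hij
    exact Fin.ext (by simpa using congrArg Fin.val this)
  · have := List.head?_eq_head hne
    rw [hhd] at this
    have h2 := (Option.some_injective _ this).symm
    show L.get ⟨0, _⟩ = a
    rw [List.get_eq_getElem, List.getElem_zero]
    exact h2
  · have := List.getLast?_eq_getLast hne
    rw [hlast] at this
    have h2 := (Option.some_injective _ this).symm
    rw [List.getLast_eq_getElem] at h2
    simpa using h2
  · intro i
    have := List.isChain_iff_getElem.1 hch i (by omega)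
    simpa using this


variable {V : Type*} [Fintype V] [DecidableEq V]

/-- Out-degree of `v` in the directed multigraph with multiplicity function `μ`. -/
def outDeg (μ : V → V → ℕ) (v : V) : ℕ := ∑ u, μ v u

/-- In-degree of `v` in the directed multigraph with multiplicity function `μ`. -/
def inDeg (μ : V → V → ℕ) (v : V) : ℕ := ∑ u, μ u v

/-- `μ` is `t`-balanced: `d⁺(v) − d⁻(v) = t(v)` for every vertex `v`. -/
def TBalanced (t : V → ℤ) (μ : V → V → ℕ) : Prop :=
  ∀ v, (outDeg μ v : ℤ) - (inDeg μ v : ℤ) = t v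

theorem exists_path_back (μ : V → V → ℕ) (hirrefl : ∀ v : V, μ v v = 0)
    (t : V → ℤ) (ht : ∑ v, t v = 0) (hbal : TBalanced t μ)
    (p : ℤ) (hp : p = ∑ x ∈ Finset.univ.filter (fun x => 0 < t x), t x)
    (u v : V) (huv : p < (μ u v : ℤ)) :
    ∃ (l : ℕ) (f : Fin (l + 1) → V), Function.Injective f ∧
      f 0 = v ∧ f (Fin.last l) = u ∧
      ∀ i : Fin l, 1 ≤ μ (f i.castSucc) (f i.succ) := by
  classical
  set r : V → V → Prop := fun x y => 1 ≤ μ x y with hr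
  by_cases hreach : Relation.ReflTransGen r v u
  · exact exists_fin_path hreach
  exfalso
  set S : Finset V := Finset.univ.filter (fun x => Relation.ReflTransGen r v x) with hS
  have hvS : v ∈ S := by
    simp only [hS, Finset.mem_filter, Finset.mem_univ, true_and]
    exact Relation.ReflTransGen.refl
  have huS : u ∉ S := by simp [hS, hreach]
  have hclosed : ∀ x ∈ S, ∀ y, 1 ≤ μ x y → y ∈ S := by
    intro x hx y hxy
    simp only [hS, Finset.mem_filter, Finset.mem_univ, true_and] at hx ⊢
    exact hx.tail hxy
  -- cross arcs from S out are zero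
  have hcross : ∀ x ∈ S, ∀ y ∈ Sᶜ, μ x y = 0 := by
    intro x hx y hy
    by_contra h
    exact (Finset.mem_compl.1 hy) (hclosed x hx y (Nat.one_le_iff_ne_zero.2 h))
  have key : ∑ x ∈ S, t x = - ∑ x ∈ S, ∑ y ∈ Sᶜ, (μ y x : ℤ) := by
    have h1 : ∀ x, t x = ∑ y, ((μ x y : ℤ) - (μ y x : ℤ)) := by
      intro x
      rw [← hbal x, outDeg, inDeg]
      push_cast
      rw [Finset.sum_sub_distrib]
    calc ∑ x ∈ S, t x = ∑ x ∈ S, ∑ y, ((μ x y : ℤ) - (μ y x : ℤ)) := by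
          exact Finset.sum_congr rfl fun x _ => h1 x
      _ = ∑ x ∈ S, (∑ y ∈ S, ((μ x y : ℤ) - (μ y x : ℤ))
            + ∑ y ∈ Sᶜ, ((μ x y : ℤ) - (μ y x : ℤ))) := by
          refine Finset.sum_congr rfl fun x _ => ?_
          rw [Finset.sum_add_sum_compl]
      _ = (∑ x ∈ S, ∑ y ∈ S, ((μ x y : ℤ) - (μ y x : ℤ)))
            + ∑ x ∈ S, ∑ y ∈ Sᶜ, ((μ x y : ℤ) - (μ y x : ℤ)) := by
          rw [Finset.sum_add_distrib]
      _ = ∑ x ∈ S, ∑ y ∈ Sᶜ, ((μ x y : ℤ) - (μ y x : ℤ)) := by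
          have : ∑ x ∈ S, ∑ y ∈ S, ((μ x y : ℤ) - (μ y x : ℤ)) = 0 := by
            simp only [Finset.sum_sub_distrib]
            rw [Finset.sum_comm (s := S) (t := S) (f := fun x y => (μ x y : ℤ))]
            ring
          rw [this, zero_add]
      _ = - ∑ x ∈ S, ∑ y ∈ Sᶜ, (μ y x : ℤ) := by
          rw [← Finset.sum_neg_distrib]
          refine Finset.sum_congr rfl fun x hx => ?_
          rw [← Finset.sum_neg_distrib]
          refine Finset.sum_congr rfl fun y hy => ?_
          rw [hcross x hx y hy]
          push_cast
          ring
  -- lower bound on cut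
  have hcut : (μ u v : ℤ) ≤ ∑ x ∈ S, ∑ y ∈ Sᶜ, (μ y x : ℤ) := by
    have h1 : (μ u v : ℤ) ≤ ∑ y ∈ Sᶜ, (μ y v : ℤ) :=
      Finset.single_le_sum (f := fun y => (μ y v : ℤ)) (fun y _ => by positivity)
        (Finset.mem_compl.2 huS)
    refine le_trans h1 ?_
    exact Finset.single_le_sum (f := fun x => ∑ y ∈ Sᶜ, (μ y x : ℤ))
      (fun x _ => Finset.sum_nonneg fun y _ => by positivity) hvS
  -- lower bound on sum of demands over S
  have hneg : ∑ x ∈ Finset.univ.filter (fun x => ¬ 0 < t x), t x = -p := by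
    have := Finset.sum_filter_add_sum_filter_not Finset.univ (fun x => 0 < t x) t
    rw [ht, ← hp] at this
    linarith
  have hlow : -p ≤ ∑ x ∈ S, t x := by
    have h1 : ∑ x ∈ Finset.univ.filter (fun x => ¬ 0 < t x), t x
        ≤ ∑ x ∈ S.filter (fun x => ¬ 0 < t x), t x := by
      have hsub : S.filter (fun x => ¬ 0 < t x) ⊆ Finset.univ.filter (fun x => ¬ 0 < t x) := by
        intro x hx
        simp only [Finset.mem_filter] at hx ⊢
        exact ⟨Finset.mem_univ x, hx.2⟩
      have := Finset.sum_le_sum_of_subset_of_nonneg (f := fun x => -t x) hsub ?_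
      · simp only [Finset.sum_neg_distrib] at this
        linarith
      · intro x hx _
        simp only [Finset.mem_filter, not_lt] at hx
        simpa using hx.2
    have h2 : ∑ x ∈ S.filter (fun x => ¬ 0 < t x), t x ≤ ∑ x ∈ S, t x := by
      refine Finset.sum_le_sum_of_subset_of_nonneg (Finset.filter_subset _ _) ?_
      intro x hmem hx
      simp only [Finset.mem_filter, not_and, not_not] at hx
      exact le_of_lt (hx hmem)
    rw [hneg] at h1
    linarith
  linarith [key, hcut, hlow]

end Stmt10
end

section
/- Let G = (V,E) be a connected simple graph with weight function w : E → ℕ and demand function t : V → ℤ with Σ_v t(v) = 0, and let X = {v ∈ V : d_G(v) − t(v) is odd}. Then the minimum weight of an undirected multigraph H whose underlying simple graph is G (μ_H({u,v}) ≥ 1 exactly when uv ∈ E, and 0 otherwise) and in which d_H(v) − t(v) is even for every vertex v, equals Σ_{e∈E} w(e) + min{ Σ_{e∈J} w(e) : J ⊆ E is an X-join }. In particular, if J is a minimum-weight X-join, then the multigraph H obtained from G by doubling each edge of J attains this minimum. -/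
/-!
Statement 11: Let `G = (V,E)` be a connected simple graph with weight function `w : E → ℕ`
and demand function `t : V → ℤ` with `Σ_v t(v) = 0`, and let
`X = {v ∈ V : d_G(v) − t(v) is odd}`.  Then the minimum weight of an undirected multigraph
`H` whose underlying simple graph is `G` and in which `d_H(v) − t(v)` is even for every
vertex `v` equals `Σ_{e∈E} w(e) + min{ Σ_{e∈J} w(e) : J ⊆ E is an X-join }`.  In
particular, if `J` is a minimum-weight `X`-join, then the multigraph `H` obtained from `G`
by doubling each edge of `J` attains this minimum.
-/

set_option linter.unusedSectionVars false
set_option maxHeartbeats 1000000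
namespace Stmt11

variable {V : Type*} [Fintype V] [DecidableEq V]

/-- The weight of an undirected multigraph with symmetric multiplicity function `μH`, with
respect to edge weights `w : Sym2 V → ℕ` (the double sum counts each edge twice, hence `/ 2`). -/
def mweight (w : Sym2 V → ℕ) (μH : V → V → ℕ) : ℕ := (∑ u, ∑ v, μH u v * w s(u, v)) / 2

/-- The conditions on the multigraph `H`: it is symmetric, its underlying simple graph is
`G`, and `d_H(v) − t(v)` is even for every vertex `v`. -/
def Good (G : SimpleGraph V) (t : V → ℤ) (μH : V → V → ℕ) : Prop :=
  (∀ u v : V, μH u v = μH v u) ∧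
  (∀ u v : V, 1 ≤ μH u v ↔ G.Adj u v) ∧
  (∀ v : V, Even ((∑ u, μH v u : ℤ) - t v))

/-- `J` is an `X`-join of `G` for `X = {v : d_G(v) − t(v) is odd}`: a set of edges of `G`
such that the number of edges of `J` incident to `v` is odd if and only if `v ∈ X`. -/
def IsXJoin (G : SimpleGraph V) [DecidableRel G.Adj] (t : V → ℤ) (J : Finset (Sym2 V)) :
    Prop :=
  J ⊆ G.edgeFinset ∧
  ∀ v : V, (Odd (J.filter (fun e => v ∈ e)).card ↔ Odd ((G.degree v : ℤ) - t v))

/-- The multigraph obtained from `G` by doubling each edge of `J`. -/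
def doubled (G : SimpleGraph V) [DecidableRel G.Adj] (J : Finset (Sym2 V)) :
    V → V → ℕ :=
  fun u v => if G.Adj u v then (if s(u, v) ∈ J then 2 else 1) else 0

lemma zmod2_cases : ∀ x : ZMod 2, x = 0 ∨ x = 1 := by decide

lemma int_cast_eq_zero_iff_even (k : ℤ) : (k : ZMod 2) = 0 ↔ Even k := by
  rw [ZMod.intCast_zmod_eq_zero_iff_dvd, Int.even_iff]; omega

lemma int_cast_eq_one_iff_odd (k : ℤ) : (k : ZMod 2) = 1 ↔ Odd k := by
  rw [← Int.not_even_iff_odd, ← int_cast_eq_zero_iff_even]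
  rcases zmod2_cases (k : ZMod 2) with h | h <;> simp [h]

/-- parity of incidence count -/
def phi (J : Finset (Sym2 V)) (v : V) : ZMod 2 := ((J.filter (fun e => v ∈ e)).card : ZMod 2)

lemma card_symmDiff_zmod2 (A B : Finset (Sym2 V)) :
    ((symmDiff A B).card : ZMod 2) = A.card + B.card := by
  have h1 : (symmDiff A B).card + (A ∩ B).card + (A ∩ B).card = A.card + B.card := by
    rw [symmDiff_def]
    have hd : Disjoint (A \ B) (B \ A) := disjoint_sdiff_sdiff
    rw [Finset.sup_eq_union, Finset.card_union_of_disjoint hd]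
    have h2 := Finset.card_sdiff_add_card_inter A B
    have h3 := Finset.card_sdiff_add_card_inter B A
    rw [Finset.inter_comm B A] at h3
    omega
  have := congrArg (fun n : ℕ => (n : ZMod 2)) h1
  push_cast at this
  have hx : ∀ x y : ZMod 2, y + x + x = y → y = y := fun _ _ _ => rfl
  have hchar : ∀ x : ZMod 2, x + x = 0 := by decide
  calc ((symmDiff A B).card : ZMod 2)
      = ((symmDiff A B).card : ZMod 2) + ((A ∩ B).card + (A ∩ B).card) := by
        rw [hchar, add_zero]
    _ = A.card + B.card := by rw [← add_assoc]; exact this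

lemma phi_symmDiff (J J' : Finset (Sym2 V)) (v : V) :
    phi (symmDiff J J') v = phi J v + phi J' v := by
  unfold phi
  have hfe : (symmDiff J J').filter (fun e => v ∈ e)
      = symmDiff (J.filter (fun e => v ∈ e)) (J'.filter (fun e => v ∈ e)) := by
    ext e
    simp only [Finset.mem_filter, Finset.mem_symmDiff]
    tauto
  rw [hfe, card_symmDiff_zmod2]

lemma phi_singleton (a b : V) (hab : a ≠ b) (v : V) :
    phi {s(a,b)} v = (if v = a then 1 else 0) + (if v = b then 1 else 0) := by
  unfold phi
  rw [Finset.filter_singleton]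
  by_cases hv : v ∈ s(a,b)
  · rw [if_pos hv]
    rcases Sym2.mem_iff.mp hv with rfl | rfl
    · simp [hab]
    · simp [Ne.symm hab, hab]
  · rw [if_neg hv]
    rw [Sym2.mem_iff] at hv
    push_neg at hv
    simp [hv.1, hv.2]

/-- the symmetric-difference of edges along a walk -/
def walkJ {G : SimpleGraph V} : ∀ {a b : V}, G.Walk a b → Finset (Sym2 V)
  | _, _, SimpleGraph.Walk.nil => ∅
  | _, _, SimpleGraph.Walk.cons (u := a) (v := c) _ p => symmDiff {s(a,c)} (walkJ p)

lemma walkJ_subset {G : SimpleGraph V} [DecidableRel G.Adj] {a b : V} (p : G.Walk a b) :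
    walkJ p ⊆ G.edgeFinset := by
  induction p with
  | nil => simp [walkJ]
  | cons h p ih =>
    intro e he
    rw [walkJ] at he
    rcases Finset.mem_symmDiff.mp he with ⟨h1, _⟩ | ⟨h1, _⟩
    · rw [Finset.mem_singleton] at h1
      subst h1
      rwa [SimpleGraph.mem_edgeFinset, SimpleGraph.mem_edgeSet]
    · exact ih h1

lemma phi_walkJ {G : SimpleGraph V} {a b : V} (p : G.Walk a b) (v : V) :
    phi (walkJ p) v = (if v = a then 1 else 0) + (if v = b then 1 else 0) := by
  have hchar : ∀ x y z : ZMod 2, x + y + (y + z) = x + z := by decide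
  induction p with
  | nil =>
    unfold phi walkJ
    simp only [Finset.filter_empty, Finset.card_empty, Nat.cast_zero]
    exact ((by decide : ∀ x : ZMod 2, x + x = 0) _).symm
  | cons h p ih =>
    rw [walkJ, phi_symmDiff, ih, phi_singleton _ _ (G.ne_of_adj h)]
    exact hchar _ _ _

lemma exists_join (G : SimpleGraph V) [DecidableRel G.Adj] (hconn : G.Connected)
    (x : V → ZMod 2) (hx : ∑ v, x v = 0) :
    ∃ J : Finset (Sym2 V), J ⊆ G.edgeFinset ∧ ∀ v, phi J v = x v := by
  obtain ⟨n, hn⟩ : ∃ n, (Finset.univ.filter (fun v => x v = 1)).card = n := ⟨_, rfl⟩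
  induction n using Nat.strong_induction_on generalizing x with
  | _ n ih =>
    set S := Finset.univ.filter (fun v => x v = 1) with hS
    by_cases hemp : S = ∅
    · refine ⟨∅, Finset.empty_subset _, fun v => ?_⟩
      have hv : x v = 0 := by
        rcases zmod2_cases (x v) with h | h
        · exact h
        · exact absurd (hS ▸ Finset.mem_filter.mpr ⟨Finset.mem_univ v, h⟩)
            (by rw [hemp]; exact Finset.notMem_empty v)
      simp [phi, hv]
    · -- S nonempty; its card is even since sum is 0
      have hsum_split := Finset.sum_filter_add_sum_filter_not Finset.univ
        (fun v => x v = 1) x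
      have h1 : ∑ v ∈ S, x v = (S.card : ZMod 2) := by
        rw [Finset.sum_congr rfl (fun v hv => (Finset.mem_filter.mp hv).2)]
        simp
        rfl
      have h2 : ∑ v ∈ Finset.univ.filter (fun v => ¬ x v = 1), x v = 0 := by
        apply Finset.sum_eq_zero
        intro v hv
        rcases zmod2_cases (x v) with h | h
        · exact h
        · exact absurd h (Finset.mem_filter.mp hv).2
      have hcard0 : ((S.card : ℕ) : ZMod 2) = 0 := by
        rw [h2, add_zero, hx, h1] at hsum_split
        exact hsum_split
      have heven : Even S.card := ZMod.natCast_eq_zero_iff_even.mp hcard0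
      have hpos : 0 < S.card := Finset.card_pos.mpr (Finset.nonempty_iff_ne_empty.mpr hemp)
      have h2le : 1 < S.card := by
        obtain ⟨k, hk⟩ := heven; omega
      obtain ⟨a, ha⟩ := Finset.card_pos.mp hpos
      obtain ⟨b, hb, hba⟩ := Finset.exists_mem_ne h2le a
      have hxa : x a = 1 := (Finset.mem_filter.mp ha).2
      have hxb : x b = 1 := (Finset.mem_filter.mp hb).2
      obtain ⟨p⟩ : G.Reachable a b := hconn a b
      set J0 := walkJ p with hJ0
      set x' := fun v => x v + phi J0 v with hx'
      have hphi : ∀ v, phi J0 v = (if v = a then 1 else 0) + (if v = b then 1 else 0) :=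
        phi_walkJ p
      have hchar : (1 : ZMod 2) + 1 = 0 := by decide
      have hx'a : x' a = 0 := by
        have h := hphi a
        rw [if_pos rfl, if_neg (Ne.symm hba), add_zero] at h
        show x a + phi J0 a = 0
        rw [h, hxa]; exact hchar
      have hx'b : x' b = 0 := by
        have h := hphi b
        rw [if_pos rfl, if_neg hba, zero_add] at h
        show x b + phi J0 b = 0
        rw [h, hxb]; exact hchar
      have hx'v : ∀ v, v ≠ a → v ≠ b → x' v = x v := by
        intro v hva hvb
        simp [hx', hphi, hva, hvb]
      have hfilter : Finset.univ.filter (fun v => x' v = 1) = (S.erase a).erase b := by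
        ext v
        simp only [Finset.mem_filter, Finset.mem_univ, true_and, Finset.mem_erase, hS]
        by_cases hva : v = a
        · subst hva; simp [hx'a]
        · by_cases hvb : v = b
          · subst hvb; simp [hx'b]
          · simp [hx'v v hva hvb, hva, hvb]
      have hcard' : ((S.erase a).erase b).card = n - 2 := by
        rw [Finset.card_erase_of_mem (Finset.mem_erase.mpr ⟨hba, hb⟩),
          Finset.card_erase_of_mem ha, hn]
        omega
      have hsum' : ∑ v, x' v = 0 := by
        have : ∑ v, x' v = (∑ v, x v) + ∑ v, phi J0 v := by
          rw [hx', Finset.sum_add_distrib]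
        rw [this, hx, zero_add]
        have : ∀ v, phi J0 v = (if v = a then (1:ZMod 2) else 0) + (if v = b then 1 else 0) := hphi
        rw [Finset.sum_congr rfl (fun v _ => this v), Finset.sum_add_distrib]
        rw [Finset.sum_ite_eq' Finset.univ a (fun _ => (1:ZMod 2)),
          Finset.sum_ite_eq' Finset.univ b (fun _ => (1:ZMod 2))]
        simp
        decide
      obtain ⟨J1, hJ1sub, hJ1phi⟩ := ih (n - 2) (by omega) x' hsum' (hcard'.symm ▸ congrArg Finset.card hfilter)
      refine ⟨symmDiff J0 J1, ?_, ?_⟩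
      · intro e he
        rcases Finset.mem_symmDiff.mp he with ⟨h1, _⟩ | ⟨h1, _⟩
        · exact walkJ_subset p h1
        · exact hJ1sub h1
      · intro v
        rw [phi_symmDiff, hJ1phi v, hx']
        exact (by decide : ∀ y z : ZMod 2, y + (z + y) = z) _ _

lemma sum_adj_eq (G : SimpleGraph V) [DecidableRel G.Adj] (g : Sym2 V → ℕ) :
    ∑ u, ∑ v, (if G.Adj u v then g s(u, v) else 0) = 2 * ∑ e ∈ G.edgeFinset, g e := by
  have h1 : ∑ u, ∑ v, (if G.Adj u v then g s(u, v) else 0)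
      = ∑ p ∈ (Finset.univ ×ˢ Finset.univ).filter (fun p : V × V => G.Adj p.1 p.2),
          g s(p.1, p.2) := by
    rw [Finset.sum_filter, Finset.sum_product]
  have hmap : ∀ p ∈ (Finset.univ ×ˢ Finset.univ).filter (fun p : V × V => G.Adj p.1 p.2),
      s(p.1, p.2) ∈ G.edgeFinset := by
    intro p hp
    rw [SimpleGraph.mem_edgeFinset, SimpleGraph.mem_edgeSet]
    exact (Finset.mem_filter.mp hp).2
  rw [h1, ← Finset.sum_fiberwise_of_maps_to hmap (fun p => g s(p.1, p.2)), Finset.mul_sum]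
  apply Finset.sum_congr rfl
  intro e he
  induction e using Sym2.ind with
  | _ a b =>
    have hadj : G.Adj a b := by rwa [SimpleGraph.mem_edgeFinset, SimpleGraph.mem_edgeSet] at he
    have hne : a ≠ b := G.ne_of_adj hadj
    have hfib : ((Finset.univ ×ˢ Finset.univ).filter (fun p : V × V => G.Adj p.1 p.2)).filter
        (fun p => s(p.1, p.2) = s(a, b)) = {(a, b), (b, a)} := by
      ext ⟨u, v⟩
      simp only [Finset.mem_filter, Finset.mem_product, Finset.mem_univ, true_and,
        Finset.mem_insert, Finset.mem_singleton, Prod.mk.injEq, Sym2.eq_iff]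
      constructor
      · rintro ⟨-, (⟨rfl, rfl⟩ | ⟨rfl, rfl⟩)⟩
        · left; exact ⟨rfl, rfl⟩
        · right; exact ⟨rfl, rfl⟩
      · rintro (⟨rfl, rfl⟩ | ⟨rfl, rfl⟩)
        · exact ⟨hadj, Or.inl ⟨rfl, rfl⟩⟩
        · exact ⟨hadj.symm, Or.inr ⟨rfl, rfl⟩⟩
    rw [hfib]
    have hsum : ∑ p ∈ ({(a, b), (b, a)} : Finset (V × V)), g s(p.1, p.2) = g s(a,b) + g s(b,a) := by
      rw [Finset.sum_insert (by simp [hne, Prod.ext_iff]), Finset.sum_singleton]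
    rw [hsum, Sym2.eq_swap]
    ring

lemma incidence_sum (G : SimpleGraph V) [DecidableRel G.Adj] (J : Finset (Sym2 V))
    (hJ : J ⊆ G.edgeFinset) (v : V) (f : Sym2 V → ℕ) :
    ∑ e ∈ J.filter (fun e => v ∈ e), f e
      = ∑ u ∈ Finset.univ.filter (fun u => G.Adj v u ∧ s(v, u) ∈ J), f s(v, u) := by
  refine Finset.sum_bij' (fun e he => (Sym2.Mem.other' (Finset.mem_filter.mp he).2))
    (fun u _ => s(v, u)) ?hi ?hj ?li ?ri ?h
  case hi =>
    intro e he
    obtain ⟨heJ, hve⟩ := Finset.mem_filter.mp he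
    have hspec := Sym2.other_spec' hve
    have hE := hJ heJ
    rw [SimpleGraph.mem_edgeFinset, ← hspec, SimpleGraph.mem_edgeSet] at hE
    rw [Finset.mem_filter]
    refine ⟨Finset.mem_univ _, hE, ?_⟩
    rw [hspec]; exact heJ
  case hj =>
    intro u hu
    obtain ⟨-, hadj, hmem⟩ := Finset.mem_filter.mp hu
    exact Finset.mem_filter.mpr ⟨hmem, Sym2.mem_mk_left v u⟩
  case li =>
    intro e he
    exact Sym2.other_spec' (Finset.mem_filter.mp he).2
  case ri =>
    intro u hu
    apply Sym2.congr_right.mp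
    exact Sym2.other_spec' _
  case h =>
    intro e he
    rw [Sym2.other_spec' (Finset.mem_filter.mp he).2]

lemma incidence_card (G : SimpleGraph V) [DecidableRel G.Adj] (J : Finset (Sym2 V))
    (hJ : J ⊆ G.edgeFinset) (v : V) :
    (J.filter (fun e => v ∈ e)).card
      = (Finset.univ.filter (fun u => G.Adj v u ∧ s(v, u) ∈ J)).card := by
  have h := incidence_sum G J hJ v (fun _ => 1)
  rw [Finset.card_eq_sum_ones, Finset.card_eq_sum_ones]
  exact h

lemma sum_doubled_row (G : SimpleGraph V) [DecidableRel G.Adj] (J : Finset (Sym2 V))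
    (hJ : J ⊆ G.edgeFinset) (v : V) :
    ∑ u, doubled G J v u = G.degree v + (J.filter (fun e => v ∈ e)).card := by
  have hsplit : ∀ u, doubled G J v u
      = (if G.Adj v u then 1 else 0) + (if G.Adj v u ∧ s(v, u) ∈ J then 1 else 0) := by
    intro u
    unfold doubled
    by_cases h1 : G.Adj v u <;> by_cases h2 : s(v, u) ∈ J <;> simp [h1, h2]
  rw [Finset.sum_congr rfl (fun u _ => hsplit u), Finset.sum_add_distrib]
  congr 1
  · rw [← Finset.card_filter]
    rw [SimpleGraph.degree, SimpleGraph.neighborFinset_eq_filter]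
  · rw [← Finset.card_filter, incidence_card G J hJ v]

/-- existence of an X-join -/
lemma exists_XJoin (G : SimpleGraph V) [DecidableRel G.Adj] (hconn : G.Connected)
    (t : V → ℤ) (ht : ∑ v, t v = 0) : ∃ J : Finset (Sym2 V), IsXJoin G t J := by
  set x : V → ZMod 2 := fun v => (((G.degree v : ℤ) - t v : ℤ) : ZMod 2) with hxdef
  have hx : ∑ v, x v = 0 := by
    have h1 : ∑ v, (((G.degree v : ℤ) - t v : ℤ) : ZMod 2)
        = (((∑ v, ((G.degree v : ℤ) - t v)) : ℤ) : ZMod 2) := by push_cast; rfl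
    rw [hxdef, h1, Finset.sum_sub_distrib, ht, sub_zero]
    have h2 : ∑ v, ((G.degree v : ℤ)) = ((∑ v, G.degree v : ℕ) : ℤ) := by push_cast; rfl
    rw [h2, G.sum_degrees_eq_twice_card_edges]
    push_cast
    ring_nf
    exact (by decide : ∀ x : ZMod 2, x * 2 = 0) _
  obtain ⟨J, hsub, hphi⟩ := exists_join G hconn x hx
  refine ⟨J, hsub, fun v => ?_⟩
  rw [← ZMod.natCast_eq_one_iff_odd, ← int_cast_eq_one_iff_odd]
  have := hphi v
  rw [phi] at this
  rw [this]

lemma mweight_doubled (G : SimpleGraph V) [DecidableRel G.Adj] (w : Sym2 V → ℕ)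
    (J : Finset (Sym2 V)) (hJ : J ⊆ G.edgeFinset) :
    mweight w (doubled G J) = (∑ e ∈ G.edgeFinset, w e) + ∑ e ∈ J, w e := by
  unfold mweight
  have hsplit : ∀ u v, doubled G J u v * w s(u, v)
      = (if G.Adj u v then w s(u, v) else 0)
        + (if G.Adj u v then (if s(u, v) ∈ J then w s(u, v) else 0) else 0) := by
    intro u v
    unfold doubled
    by_cases h1 : G.Adj u v <;> by_cases h2 : s(u, v) ∈ J <;> simp [h1, h2] <;> ring
  have hJsum : ∑ e ∈ G.edgeFinset, (if e ∈ J then w e else 0) = ∑ e ∈ J, w e := by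
    rw [← Finset.sum_filter]
    congr 1
    ext e
    simp only [Finset.mem_filter]
    exact ⟨fun h => h.2, fun h => ⟨hJ h, h⟩⟩
  have : ∑ u, ∑ v, doubled G J u v * w s(u, v)
      = (∑ u, ∑ v, (if G.Adj u v then w s(u, v) else 0))
        + ∑ u, ∑ v, (if G.Adj u v then (if s(u, v) ∈ J then w s(u, v) else 0) else 0) := by
    rw [← Finset.sum_add_distrib]
    apply Finset.sum_congr rfl
    intro u _
    rw [← Finset.sum_add_distrib]
    exact Finset.sum_congr rfl (fun v _ => hsplit u v)
  rw [this, sum_adj_eq G w, sum_adj_eq G (fun e => if e ∈ J then w e else 0), hJsum]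
  omega

/-- any good multigraph gives an X-join whose weight bounds it below -/
lemma mweight_lower (G : SimpleGraph V) [DecidableRel G.Adj] (w : Sym2 V → ℕ)
    (t : V → ℤ) (μ : V → V → ℕ) (hgood : Good G t μ) :
    ∃ J' : Finset (Sym2 V), IsXJoin G t J' ∧
      (∑ e ∈ G.edgeFinset, w e) + ∑ e ∈ J', w e ≤ mweight w μ := by
  obtain ⟨hsymm, hund, hpar⟩ := hgood
  set μe : Sym2 V → ℕ := Sym2.lift ⟨fun u v => μ u v, fun u v => hsymm u v⟩ with hμedef
  have hμe : ∀ u v, μe s(u, v) = μ u v := fun u v => rfl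
  have hzero : ∀ u v, ¬G.Adj u v → μ u v = 0 := by
    intro u v h
    have h2 : ¬ 1 ≤ μ u v := fun hc => h ((hund u v).mp hc)
    omega
  have hone : ∀ u v, G.Adj u v → 1 ≤ μ u v := fun u v h => (hund u v).mpr h
  -- mweight μ = ΣE w + ΣE (μe - 1) * w
  have hsplit : ∀ u v, μ u v * w s(u, v)
      = (if G.Adj u v then w s(u, v) else 0)
        + (if G.Adj u v then (μe s(u, v) - 1) * w s(u, v) else 0) := by
    intro u v
    by_cases h : G.Adj u v
    · simp only [if_pos h, hμe]
      have h1 := hone u v h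
      obtain ⟨k, hk⟩ : ∃ k, μ u v = k + 1 := ⟨μ u v - 1, by omega⟩
      rw [hk, Nat.add_sub_cancel]
      ring
    · simp [h, hzero u v h]
  have hmw : mweight w μ = (∑ e ∈ G.edgeFinset, w e)
      + ∑ e ∈ G.edgeFinset, (μe e - 1) * w e := by
    unfold mweight
    have : ∑ u, ∑ v, μ u v * w s(u, v)
        = (∑ u, ∑ v, (if G.Adj u v then w s(u, v) else 0))
          + ∑ u, ∑ v, (if G.Adj u v then (μe s(u, v) - 1) * w s(u, v) else 0) := by
      rw [← Finset.sum_add_distrib]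
      apply Finset.sum_congr rfl
      intro u _
      rw [← Finset.sum_add_distrib]
      exact Finset.sum_congr rfl (fun v _ => hsplit u v)
    rw [this, sum_adj_eq G w, sum_adj_eq G (fun e => (μe e - 1) * w e)]
    omega
  set J' : Finset (Sym2 V) := G.edgeFinset.filter (fun e => Odd (μe e - 1)) with hJ'def
  have hJ'sub : J' ⊆ G.edgeFinset := Finset.filter_subset _ _
  refine ⟨J', ⟨hJ'sub, ?_⟩, ?_⟩
  · -- parity condition
    intro v
    -- cast of card of J' incident to v equals cast of the sum of (μe e - 1) over incident edges
    have hcomm : J'.filter (fun e => v ∈ e)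
        = (G.edgeFinset.filter (fun e => v ∈ e)).filter (fun e => Odd (μe e - 1)) := by
      rw [hJ'def, Finset.filter_filter, Finset.filter_filter]
      congr 1
      ext e
      exact and_comm
    have hcast1 : ((J'.filter (fun e => v ∈ e)).card : ZMod 2)
        = ((∑ e ∈ G.edgeFinset.filter (fun e => v ∈ e), (μe e - 1) : ℕ) : ZMod 2) := by
      rw [hcomm, Finset.card_filter]
      push_cast
      apply Finset.sum_congr rfl
      intro e _
      rcases Nat.even_or_odd (μe e - 1) with h | h
      · rw [if_neg (by rwa [Nat.not_odd_iff_even]), (ZMod.natCast_eq_zero_iff_even).mpr h]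
      · rw [if_pos h, (ZMod.natCast_eq_one_iff_odd).mpr h]
    -- relate that sum to the degree sum
    have hfil : Finset.univ.filter (fun u => G.Adj v u ∧ s(v, u) ∈ G.edgeFinset)
        = Finset.univ.filter (fun u => G.Adj v u) := by
      apply Finset.filter_congr
      intro u _
      simp only [SimpleGraph.mem_edgeFinset, SimpleGraph.mem_edgeSet, and_iff_left_iff_imp]
      exact fun h => h
    have hinc := incidence_sum G G.edgeFinset (subset_rfl) v (fun e => μe e - 1)
    rw [hfil] at hinc
    -- total degree identity
    have hrow : ∑ u, μ v u = G.degree v + ∑ u ∈ Finset.univ.filter (fun u => G.Adj v u), (μ v u - 1) := by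
      have h1 : ∑ u, μ v u = ∑ u ∈ Finset.univ.filter (fun u => G.Adj v u), μ v u := by
        rw [Finset.sum_filter]
        apply Finset.sum_congr rfl
        intro u _
        by_cases h : G.Adj v u
        · rw [if_pos h]
        · rw [if_neg h, hzero v u h]
      rw [h1]
      have h2 : ∀ u ∈ Finset.univ.filter (fun u => G.Adj v u), μ v u = 1 + (μ v u - 1) := by
        intro u hu
        have := hone v u (Finset.mem_filter.mp hu).2
        omega
      rw [Finset.sum_congr rfl h2, Finset.sum_add_distrib]
      congr 1
      rw [← Finset.card_eq_sum_ones, SimpleGraph.degree, SimpleGraph.neighborFinset_eq_filter]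
    have hμsum : ∑ u ∈ Finset.univ.filter (fun u => G.Adj v u), (μ v u - 1)
        = ∑ e ∈ G.edgeFinset.filter (fun e => v ∈ e), (μe e - 1) := by
      rw [hinc]
      exact Finset.sum_congr rfl (fun u _ => by rw [hμe])
    have hμsumc := congrArg (fun n : ℕ => (n : ZMod 2)) hμsum
    push_cast at hμsumc
    push_cast at hcast1
    have hrowc := congrArg (fun n : ℕ => (n : ZMod 2)) hrow
    push_cast at hrowc
    have hp := hpar v
    rw [← int_cast_eq_zero_iff_even] at hp
    push_cast at hp
    rw [← ZMod.natCast_eq_one_iff_odd, ← int_cast_eq_one_iff_odd]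
    suffices hAB : (((J'.filter (fun e => v ∈ e)).card : ℕ) : ZMod 2)
        = ((((G.degree v : ℤ) - t v) : ℤ) : ZMod 2) by rw [hAB]
    push_cast
    rw [hcast1, ← hμsumc]
    have hST : (∑ u, ((μ v u : ℕ) : ZMod 2)) = ((t v : ℤ) : ZMod 2) := by
      rw [← sub_eq_zero]; exact hp
    have hT : ((t v : ℤ) : ZMod 2) = ((G.degree v : ℕ) : ZMod 2)
        + ∑ u ∈ Finset.univ.filter (fun u => G.Adj v u), ((μ v u - 1 : ℕ) : ZMod 2) := by
      rw [← hST, hrowc]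
    have key : ∀ C D T : ZMod 2, T = D + C → C = D - T := by decide
    exact key _ _ _ hT
  · -- weight bound
    have hw1 : ∑ e ∈ J', w e ≤ ∑ e ∈ J', (μe e - 1) * w e := by
      apply Finset.sum_le_sum
      intro e he
      have hodd : Odd (μe e - 1) := (Finset.mem_filter.mp he).2
      have hpos : 0 < μe e - 1 := hodd.pos
      exact Nat.le_mul_of_pos_left (w e) hpos
    have hw2 : ∑ e ∈ J', (μe e - 1) * w e ≤ ∑ e ∈ G.edgeFinset, (μe e - 1) * w e :=
      Finset.sum_le_sum_of_subset hJ'sub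
    omega


theorem min_weight_via_XJoin (G : SimpleGraph V) [DecidableRel G.Adj]
    (hconn : G.Connected) (w : Sym2 V → ℕ) (t : V → ℤ) (ht : ∑ v, t v = 0) :
    (∃ J : Finset (Sym2 V), IsXJoin G t J) ∧
    ∀ J : Finset (Sym2 V), IsXJoin G t J →
      (∀ J' : Finset (Sym2 V), IsXJoin G t J' → ∑ e ∈ J, w e ≤ ∑ e ∈ J', w e) →
      Good G t (doubled G J) ∧
      mweight w (doubled G J) = (∑ e ∈ G.edgeFinset, w e) + ∑ e ∈ J, w e ∧
      ∀ μH : V → V → ℕ, Good G t μH → mweight w (doubled G J) ≤ mweight w μH := by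
  refine ⟨exists_XJoin G hconn t ht, ?_⟩
  intro J hJ hmin
  obtain ⟨hJsub, hJpar⟩ := hJ
  have hgood : Good G t (doubled G J) := by
    refine ⟨?_, ?_, ?_⟩
    · intro u v
      unfold doubled
      by_cases h : G.Adj u v
      · rw [if_pos h, if_pos h.symm, Sym2.eq_swap]
      · rw [if_neg h, if_neg (fun hc => h hc.symm)]
    · intro u v
      unfold doubled
      by_cases h1 : G.Adj u v <;> by_cases h2 : s(u, v) ∈ J <;> simp [h1, h2]
    · intro v
      have hrow := sum_doubled_row G J hJsub v
      have hc : (((J.filter (fun e => v ∈ e)).card : ℕ) : ZMod 2)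
          = (((G.degree v : ℤ) - t v : ℤ) : ZMod 2) := by
        rcases Nat.even_or_odd (J.filter (fun e => v ∈ e)).card with h | h
        · rw [ZMod.natCast_eq_zero_iff_even.mpr h]
          symm
          rw [int_cast_eq_zero_iff_even, ← Int.not_odd_iff_even]
          intro hodd
          rw [← (hJpar v)] at hodd
          exact (Nat.not_odd_iff_even.mpr h) hodd
        · rw [ZMod.natCast_eq_one_iff_odd.mpr h]
          symm
          rw [int_cast_eq_one_iff_odd]
          exact (hJpar v).mp h
      rw [← int_cast_eq_zero_iff_even]
      have hrowc := congrArg (fun n : ℕ => ((n : ℤ) : ZMod 2)) hrow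
      push_cast at hrowc hc ⊢
      rw [hrowc, hc]
      exact (by decide : ∀ D T : ZMod 2, D + (D - T) - T = 0) _ _
  refine ⟨hgood, mweight_doubled G w J hJsub, ?_⟩
  intro μH hμ
  obtain ⟨J', hXJ', hle⟩ := mweight_lower G w t μH hμ
  rw [mweight_doubled G w J hJsub]
  have := hmin J' hXJ'
  omega


end Stmt11
end

section
/- Let G = (V, E ∪ A) be a strongly connected simple mixed graph with weight function w : E ∪ A → ℕ. Let φ : A → ℕ with φ(a) ≥ 1 for all a ∈ A, and define t_φ : V → ℤ by t_φ(v) = Σ_{(u,v)∈A} φ((u,v)) − Σ_{(v,u)∈A} φ((v,u)). If D' is a t_φ-balanced multi-orientation of the simple graph (V,E), then the directed multigraph D defined by μ_D(u,v) = μ_{D'}(u,v) + (φ((u,v)) if (u,v) ∈ A, else 0) is an Eulerian multi-orientation of G, and the weight of D equals the weight of D' plus Σ_{a∈A} φ(a)·w(a). -/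
/-!
Statement 12: Let `G = (V, E ∪ A)` be a strongly connected simple mixed graph with weight
function `w : E ∪ A → ℕ`.  Let `φ : A → ℕ` with `φ(a) ≥ 1` for all `a ∈ A`, and define
`t_φ : V → ℤ` by `t_φ(v) = Σ_{(u,v)∈A} φ((u,v)) − Σ_{(v,u)∈A} φ((v,u))`.  If `D'` is a
`t_φ`-balanced multi-orientation of the simple graph `(V,E)`, then the directed multigraph
`D` with `μ_D(u,v) = μ_{D'}(u,v) + (φ((u,v))` if `(u,v) ∈ A`, else `0)` is an Eulerian
multi-orientation of `G`, and the weight of `D` equals the weight of `D'` plus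
`Σ_{a∈A} φ(a)·w(a)`.
-/

namespace Stmt12

/-- A simple mixed graph on `V`: a set of (undirected) edges `E` (stored as a symmetric set
of ordered pairs) and a set of arcs `A`, with at most one edge or arc (not both) between any
pair of distinct vertices, and no loops. -/
structure MixedGraph (V : Type*) where
  E : Finset (V × V)
  A : Finset (V × V)
  E_symm : ∀ u v : V, (u, v) ∈ E → (v, u) ∈ E
  E_irrefl : ∀ v : V, (v, v) ∉ E
  A_irrefl : ∀ v : V, (v, v) ∉ A
  simple_EA : ∀ u v : V, (u, v) ∈ E → (u, v) ∉ A ∧ (v, u) ∉ A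
  simple_A : ∀ u v : V, (u, v) ∈ A → (v, u) ∉ A

variable {V : Type*} [Fintype V] [DecidableEq V]

/-- Out-degree of `v` in the directed multigraph with multiplicity function `μ`. -/
def outDeg (μ : V → V → ℕ) (v : V) : ℕ := ∑ u, μ v u

/-- In-degree of `v` in the directed multigraph with multiplicity function `μ`. -/
def inDeg (μ : V → V → ℕ) (v : V) : ℕ := ∑ u, μ u v

/-- A directed multigraph is balanced if `d⁺(v) = d⁻(v)` for every vertex `v`. -/
def Balanced (μ : V → V → ℕ) : Prop := ∀ v, outDeg μ v = inDeg μ v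

/-- `μ` is `t`-balanced: `d⁺(v) − d⁻(v) = t(v)` for every vertex `v`. -/
def TBalanced (t : V → ℤ) (μ : V → V → ℕ) : Prop :=
  ∀ v, (outDeg μ v : ℤ) - (inDeg μ v : ℤ) = t v

/-- The undirected multigraph obtained from `μ` by forgetting directions is connected. -/
def UConnected (μ : V → V → ℕ) : Prop :=
  ∀ x y : V, Relation.ReflTransGen (fun a b => 0 < μ a b + μ b a) x y

/-- An Eulerian directed multigraph: balanced, with connected undirected version. -/
def Eulerian (μ : V → V → ℕ) : Prop := Balanced μ ∧ UConnected μ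

/-- `μ` is a multi-orientation of the mixed graph `G`. -/
def IsMultiOrientation (G : MixedGraph V) (μ : V → V → ℕ) : Prop :=
  (∀ u v : V, (u, v) ∈ G.A → 1 ≤ μ u v ∧ μ v u = 0) ∧
  (∀ u v : V, (u, v) ∈ G.E → 1 ≤ μ u v + μ v u) ∧
  (∀ u v : V, (u, v) ∉ G.E → (u, v) ∉ G.A → (v, u) ∉ G.A → μ u v = 0)

/-- `μ` is a multi-orientation of the simple undirected graph `(V, E)` given by the edge
set `E` of the mixed graph `G`. -/
def IsEdgeMultiOrientation (G : MixedGraph V) (μ : V → V → ℕ) : Prop :=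
  (∀ u v : V, (u, v) ∈ G.E → 1 ≤ μ u v + μ v u) ∧
  (∀ u v : V, (u, v) ∉ G.E → μ u v = 0)

/-- `G` is strongly connected. -/
def StronglyConnected (G : MixedGraph V) : Prop :=
  ∀ x y : V, Relation.ReflTransGen (fun a b => (a, b) ∈ G.E ∨ (a, b) ∈ G.A) x y

/-- The weight of a directed multigraph `μ` with respect to weights `w`. -/
def weight (w : V → V → ℕ) (μ : V → V → ℕ) : ℕ := ∑ u, ∑ v, μ u v * w u v

/-- The demand function `t_φ` induced by `φ`:
`t_φ(v) = Σ_{(u,v)∈A} φ((u,v)) − Σ_{(v,u)∈A} φ((v,u))`. -/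
def tPhi (G : MixedGraph V) (φ : V × V → ℕ) (v : V) : ℤ :=
  (∑ a ∈ G.A.filter (fun a => a.2 = v), (φ a : ℤ)) -
    ∑ a ∈ G.A.filter (fun a => a.1 = v), (φ a : ℤ)

lemma sum_arc_out (G : MixedGraph V) (φ : V × V → ℕ) (v : V) :
    (∑ u, if (v, u) ∈ G.A then φ (v, u) else 0) =
      ∑ a ∈ G.A.filter (fun a => a.1 = v), φ a := by
  classical
  rw [← Finset.sum_filter]
  refine Finset.sum_nbij' (fun u => (v, u)) (fun a => a.2) ?_ ?_ ?_ ?_ ?_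
  · intro u hu
    rw [Finset.mem_filter] at hu ⊢
    exact ⟨hu.2, rfl⟩
  · intro a ha
    rw [Finset.mem_filter] at ha
    simp only [Finset.mem_filter, Finset.mem_univ, true_and]
    rw [show (v, a.2) = a from Prod.ext ha.2.symm rfl]
    exact ha.1
  · intro u hu; rfl
  · intro a ha
    rw [Finset.mem_filter] at ha
    exact Prod.ext ha.2.symm rfl
  · intro u hu; rfl

lemma sum_arc_in (G : MixedGraph V) (φ : V × V → ℕ) (v : V) :
    (∑ u, if (u, v) ∈ G.A then φ (u, v) else 0) =
      ∑ a ∈ G.A.filter (fun a => a.2 = v), φ a := by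
  classical
  rw [← Finset.sum_filter]
  refine Finset.sum_nbij' (fun u => (u, v)) (fun a => a.1) ?_ ?_ ?_ ?_ ?_
  · intro u hu
    rw [Finset.mem_filter] at hu ⊢
    exact ⟨hu.2, rfl⟩
  · intro a ha
    rw [Finset.mem_filter] at ha
    simp only [Finset.mem_filter, Finset.mem_univ, true_and]
    rw [show (a.1, v) = a from Prod.ext rfl ha.2.symm]
    exact ha.1
  · intro u hu; rfl
  · intro a ha
    rw [Finset.mem_filter] at ha
    exact Prod.ext rfl ha.2.symm
  · intro u hu; rfl

theorem reduction_to_BCPP (G : MixedGraph V) (w : V → V → ℕ)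
    (hw : ∀ u v : V, (u, v) ∈ G.E → w u v = w v u)
    (hsc : StronglyConnected G)
    (φ : V × V → ℕ) (hφ : ∀ a ∈ G.A, 1 ≤ φ a)
    (μD' : V → V → ℕ)
    (hmo' : IsEdgeMultiOrientation G μD')
    (hbal' : TBalanced (tPhi G φ) μD')
    (μD : V → V → ℕ)
    (hμD : μD = fun u v => μD' u v + (if (u, v) ∈ G.A then φ (u, v) else 0)) :
    IsMultiOrientation G μD ∧ Eulerian μD ∧
      weight w μD = weight w μD' + ∑ a ∈ G.A, φ a * w a.1 a.2 := by
  classical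
  subst hμD
  obtain ⟨hmoE, hmoN⟩ := hmo'
  have hArc0 : ∀ u v : V, (u, v) ∈ G.A → μD' u v = 0 ∧ μD' v u = 0 := by
    intro u v ha
    constructor
    · refine hmoN u v (fun he => ?_)
      exact (G.simple_EA u v he).1 ha
    · refine hmoN v u (fun he => ?_)
      exact (G.simple_EA v u he).2 ha
  refine ⟨?_, ⟨?_, ?_⟩, ?_⟩
  · -- IsMultiOrientation
    refine ⟨?_, ?_, ?_⟩
    · intro u v ha
      constructor
      · simp only [if_pos ha]
        have := hφ _ ha
        omega
      · have h1 : (v, u) ∉ G.A := G.simple_A u v ha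
        simp only [if_neg h1]
        exact (hArc0 u v ha).2
    · intro u v he
      have h1 := hmoE u v he
      dsimp only
      omega
    · intro u v hE hA hA'
      simp only [if_neg hA]
      exact hmoN u v hE
  · -- Balanced
    intro v
    have hout : outDeg (fun u v => μD' u v + if (u, v) ∈ G.A then φ (u, v) else 0) v
        = outDeg μD' v + ∑ a ∈ G.A.filter (fun a => a.1 = v), φ a := by
      simp only [outDeg, Finset.sum_add_distrib, sum_arc_out]
    have hin : inDeg (fun u v => μD' u v + if (u, v) ∈ G.A then φ (u, v) else 0) v
        = inDeg μD' v + ∑ a ∈ G.A.filter (fun a => a.2 = v), φ a := by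
      simp only [inDeg, Finset.sum_add_distrib, sum_arc_in]
    rw [hout, hin]
    have hb := hbal' v
    unfold tPhi at hb
    have e1 : ((∑ a ∈ G.A.filter (fun a => a.1 = v), φ a : ℕ) : ℤ)
        = ∑ a ∈ G.A.filter (fun a => a.1 = v), (φ a : ℤ) := by push_cast; rfl
    have e2 : ((∑ a ∈ G.A.filter (fun a => a.2 = v), φ a : ℕ) : ℤ)
        = ∑ a ∈ G.A.filter (fun a => a.2 = v), (φ a : ℤ) := by push_cast; rfl
    omega
  · -- UConnected
    intro x y
    refine Relation.ReflTransGen.mono ?_ _ _ (hsc x y)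
    intro a b hab
    dsimp only
    rcases hab with he | ha
    · have h1 := hmoE a b he
      omega
    · have h1 := hφ _ ha
      simp only [if_pos ha]
      omega
  · -- weight
    unfold weight
    have key : ∀ u v : V, (μD' u v + if (u, v) ∈ G.A then φ (u, v) else 0) * w u v
        = μD' u v * w u v + (if (u, v) ∈ G.A then φ (u, v) * w u v else 0) := by
      intro u v
      split <;> ring
    simp only [key, Finset.sum_add_distrib]
    congr 1
    have h2 : (∑ p : V × V, if p ∈ G.A then φ p * w p.1 p.2 else 0)
        = ∑ x : V, ∑ y : V, if (x, y) ∈ G.A then φ (x, y) * w x y else 0 :=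
      Fintype.sum_prod_type (fun p : V × V => if p ∈ G.A then φ p * w p.1 p.2 else 0)
    rw [← h2, Finset.sum_ite_mem]
    simp

end Stmt12
end
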